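/- Let X be a locally compact Hausdorff space, let S be a norm-closed unital *-subalgebra of C_b(X) which separates the points of X, let K ⊆ X be compact, and let f ∈ C_b(X). Then there exists g ∈ S with g(x) = f(x) for all x ∈ K and ‖g‖_∞ ≤ 2‖f‖_∞. -/

import Mathlib

open scoped BoundedContinuousFunction

/-!
By Stone–Weierstrass, the restrictions of `S` to `K` are dense in `C(K, ℂ)`. A closed
`*`-subalgebra is stable under the continuous functional calculus, so composing an approximant
with the radial retraction onto a ball keeps it in `S`, caps its norm and leaves it unchanged on
`K`. Applying this to the error `f - uₙ`, which shrinks by a factor `ε` at each step, yields a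
norm-convergent series in `S` that equals `f` on `K` and has norm at most
`(1 + ε) / (1 - ε) * ‖f‖`; the factor `2` is the case `ε = 1 / 3`.
-/

section RadialRetraction

variable {E : Type*} [NormedAddCommGroup E] [NormedSpace ℝ E]

noncomputable def radialRetraction (r : ℝ) (z : E) : E := (max 1 (‖z‖ / r))⁻¹ • z

theorem continuous_radialRetraction (r : ℝ) : Continuous (radialRetraction (E := E) r) := by
  unfold radialRetraction
  fun_prop (disch := exact fun z => (zero_lt_one.trans_le (le_max_left _ _)).ne')

theorem norm_radialRetraction_le {r : ℝ} (hr : 0 < r) (z : E) : ‖radialRetraction r z‖ ≤ r := by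
  have hmax : 0 < max 1 (‖z‖ / r) := zero_lt_one.trans_le (le_max_left _ _)
  rw [radialRetraction, norm_smul, norm_inv, Real.norm_of_nonneg hmax.le, inv_mul_le_iff₀ hmax,
    mul_comm]
  calc ‖z‖ = r * (‖z‖ / r) := by field_simp
    _ ≤ r * max 1 (‖z‖ / r) := by gcongr; exact le_max_right _ _

theorem radialRetraction_of_norm_le {r : ℝ} {z : E} (hz : ‖z‖ ≤ r) : radialRetraction r z = z := by
  rw [radialRetraction, max_eq_left (div_le_one_of_le₀ hz ((norm_nonneg z).trans hz)), inv_one,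
    one_smul]

end RadialRetraction

namespace BoundedContinuousFunction

variable {X : Type*} [TopologicalSpace X] {S : StarSubalgebra ℂ (X →ᵇ ℂ)}

theorem cfc_apply_eq_apply {f : ℂ → ℂ} {g : X →ᵇ ℂ} (hf : ContinuousOn f (spectrum ℂ g)) (x : X) :
    cfc f g x = f (g x) :=
  (StarAlgHomClass.map_cfc (S := ℂ)
    ((ContinuousMap.evalStarAlgHom ℂ ℂ x).comp (toContinuousMapStarₐ ℂ)) f g
    (hφ := continuous_eval_const x)).trans (cfc_algebraMap (A := ℂ) (g x) f)

theorem exists_mem_forall_norm_sub_lt_of_separatesPoints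
    (hsep : ∀ x y : X, x ≠ y → ∃ s ∈ S, s x ≠ s y) {K : Set X} (hK : IsCompact K)
    (h : X →ᵇ ℂ) {ε : ℝ} (hε : 0 < ε) : ∃ s ∈ S, ∀ x ∈ K, ‖s x - h x‖ < ε := by
  have : CompactSpace K := isCompact_iff_compactSpace.mp hK
  let R : (X →ᵇ ℂ) →⋆ₐ[ℂ] C(K, ℂ) :=
    (ContinuousMap.compStarAlgHom' ℂ ℂ ⟨Subtype.val, continuous_subtype_val⟩).comp
      (toContinuousMapStarₐ ℂ)
  have hsepK : (S.map R).SeparatesPoints := by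
    intro x y hxy
    obtain ⟨s, hs, hsxy⟩ := hsep x y (Subtype.coe_injective.ne hxy)
    exact ⟨_, ⟨R s, ⟨s, hs, rfl⟩, rfl⟩, hsxy⟩
  have hdense : R h ∈ (S.map R).topologicalClosure := by
    rw [ContinuousMap.starSubalgebra_topologicalClosure_eq_top_of_separatesPoints _ hsepK]
    trivial
  rw [← SetLike.mem_coe, StarSubalgebra.topologicalClosure_coe] at hdense
  obtain ⟨_, ⟨s, hs, rfl⟩, hRs⟩ := Metric.mem_closure_iff.mp hdense ε hε
  refine ⟨s, hs, fun x hx => ?_⟩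
  rw [← dist_eq_norm, dist_comm]
  exact (ContinuousMap.dist_apply_le_dist (⟨x, hx⟩ : K)).trans_lt hRs

theorem exists_mem_norm_le_forall_eq_of_norm_le (hS : IsClosed (S : Set (X →ᵇ ℂ)))
    {g : X →ᵇ ℂ} (hg : g ∈ S) {r : ℝ} (hr : 0 < r) :
    ∃ t ∈ S, ‖t‖ ≤ r ∧ ∀ x, ‖g x‖ ≤ r → t x = g x := by
  have : IsClosed (S : Set (X →ᵇ ℂ)) := hS
  have ht := cfc_apply_eq_apply (g := g) (continuous_radialRetraction (E := ℂ) r).continuousOn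
  refine ⟨cfc (radialRetraction (E := ℂ) r) g, cfc_mem (𝕜' := ℂ) _ hg, ?_, fun x hx => ?_⟩
  · exact (norm_le hr.le).mpr fun x => ht x ▸ norm_radialRetraction_le hr (g x)
  · rw [ht, radialRetraction_of_norm_le hx]

theorem exists_mem_norm_le_forall_norm_sub_le (hS : IsClosed (S : Set (X →ᵇ ℂ)))
    (hsep : ∀ x y : X, x ≠ y → ∃ s ∈ S, s x ≠ s y) {K : Set X} (hK : IsCompact K)
    (h : X →ᵇ ℂ) {D ε : ℝ} (hD : 0 < D) (hε : 0 < ε) (hh : ∀ x ∈ K, ‖h x‖ ≤ D) :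
    ∃ t ∈ S, ‖t‖ ≤ (1 + ε) * D ∧ ∀ x ∈ K, ‖t x - h x‖ ≤ ε * D := by
  obtain ⟨s, hs, hsh⟩ :=
    exists_mem_forall_norm_sub_lt_of_separatesPoints hsep hK h (mul_pos hε hD)
  have hsK : ∀ x ∈ K, ‖s x‖ ≤ (1 + ε) * D := fun x hx =>
    calc ‖s x‖ ≤ ‖s x - h x‖ + ‖h x‖ := norm_le_norm_sub_add _ _
      _ ≤ (1 + ε) * D := by linarith [hsh x hx, hh x hx]
  obtain ⟨t, ht, htr, hts⟩ :=
    exists_mem_norm_le_forall_eq_of_norm_le hS hs (by positivity : 0 < (1 + ε) * D)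
  exact ⟨t, ht, htr, fun x hx => by rw [hts x (hsK x hx)]; exact (hsh x hx).le⟩

theorem exists_seq_mem_forall_norm_sub_le (hS : IsClosed (S : Set (X →ᵇ ℂ)))
    (hsep : ∀ x y : X, x ≠ y → ∃ s ∈ S, s x ≠ s y) {K : Set X} (hK : IsCompact K)
    {f : X →ᵇ ℂ} (hf : f ≠ 0) {ε : ℝ} (hε : 0 < ε) :
    ∃ u : ℕ → X →ᵇ ℂ, u 0 = 0 ∧ (∀ n, u n ∈ S ∧ ∀ x ∈ K, ‖f x - u n x‖ ≤ ε ^ n * ‖f‖) ∧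
      ∀ n, dist (u n) (u (n + 1)) ≤ (1 + ε) * ‖f‖ * ε ^ n := by
  have hD : ∀ n, 0 < ε ^ n * ‖f‖ := fun n => by positivity
  have hstep : ∀ (n : ℕ) (h : X →ᵇ ℂ), ∃ t, (∀ x ∈ K, ‖h x‖ ≤ ε ^ n * ‖f‖) →
      t ∈ S ∧ ‖t‖ ≤ (1 + ε) * (ε ^ n * ‖f‖) ∧ ∀ x ∈ K, ‖t x - h x‖ ≤ ε * (ε ^ n * ‖f‖) := by
    intro n h
    by_cases hh : ∀ x ∈ K, ‖h x‖ ≤ ε ^ n * ‖f‖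
    · obtain ⟨t, ht⟩ := exists_mem_norm_le_forall_norm_sub_le hS hsep hK h (hD n) hε hh
      exact ⟨t, fun _ => ht⟩
    · exact ⟨0, fun h' => absurd h' hh⟩
  choose c hc using hstep
  let u : ℕ → X →ᵇ ℂ := fun n => Nat.rec 0 (fun n q => q + c n (f - q)) n
  have hu_succ : ∀ n, u (n + 1) = u n + c n (f - u n) := fun _ => rfl
  have hu : ∀ n, u n ∈ S ∧ ∀ x ∈ K, ‖f x - u n x‖ ≤ ε ^ n * ‖f‖ := by
    intro n
    induction n with
    | zero => exact ⟨S.zero_mem, fun x _ => by simpa [u] using f.norm_coe_le_norm x⟩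
    | succ n ih =>
      obtain ⟨hcS, -, hcK⟩ := hc n (f - u n) ih.2
      refine ⟨S.add_mem ih.1 hcS, fun x hx => ?_⟩
      calc ‖f x - u (n + 1) x‖ = ‖c n (f - u n) x - (f - u n) x‖ := by
            rw [hu_succ, ← norm_neg]
            congr 1
            simp only [coe_add, coe_sub, Pi.add_apply, Pi.sub_apply]
            ring
        _ ≤ ε ^ (n + 1) * ‖f‖ := by rw [pow_succ]; linarith [hcK x hx]
  refine ⟨u, rfl, hu, fun n => ?_⟩
  rw [dist_comm, dist_eq_norm]
  calc ‖u (n + 1) - u n‖ = ‖c n (f - u n)‖ := by rw [hu_succ, add_sub_cancel_left]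
    _ ≤ (1 + ε) * ‖f‖ * ε ^ n := by linarith [(hc n (f - u n) (hu n).2).2.1]

theorem exists_mem_forall_eq_norm_le (hS : IsClosed (S : Set (X →ᵇ ℂ)))
    (hsep : ∀ x y : X, x ≠ y → ∃ s ∈ S, s x ≠ s y) {K : Set X} (hK : IsCompact K)
    (f : X →ᵇ ℂ) {ε : ℝ} (hε₀ : 0 < ε) (hε₁ : ε < 1) :
    ∃ g ∈ S, (∀ x ∈ K, g x = f x) ∧ ‖g‖ ≤ (1 + ε) / (1 - ε) * ‖f‖ := by
  rcases eq_or_ne f 0 with rfl | hf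
  · exact ⟨0, S.zero_mem, fun _ _ => rfl, by simp⟩
  obtain ⟨u, hu₀, hu, hdist⟩ := exists_seq_mem_forall_norm_sub_le hS hsep hK hf hε₀
  obtain ⟨g, hg⟩ := cauchySeq_tendsto_of_complete (cauchySeq_of_le_geometric ε _ hε₁ hdist)
  refine ⟨g, hS.mem_of_tendsto hg (.of_forall fun n => (hu n).1), fun x hx => ?_, ?_⟩
  · have hux : Filter.Tendsto (fun n => u n x) Filter.atTop (nhds (f x)) := by
      rw [tendsto_iff_norm_sub_tendsto_zero]
      refine squeeze_zero (fun _ => norm_nonneg _) (fun n => ?_)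
        (by simpa using (tendsto_pow_atTop_nhds_zero_of_lt_one hε₀.le hε₁).mul_const ‖f‖)
      rw [norm_sub_rev]
      exact (hu n).2 x hx
    exact tendsto_nhds_unique (((continuous_eval_const x).tendsto g).comp hg) hux
  · have hg_le := dist_le_of_le_geometric_of_tendsto₀ ε _ hε₁ hdist hg
    rw [hu₀, dist_zero_left] at hg_le
    rwa [div_mul_eq_mul_div]

end BoundedContinuousFunction

theorem stmt2_general {X : Type*} [TopologicalSpace X]
    (S : StarSubalgebra ℂ (X →ᵇ ℂ)) (hclosed : IsClosed (S : Set (X →ᵇ ℂ)))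
    (hsep : ∀ x y : X, x ≠ y → ∃ s ∈ S, s x ≠ s y)
    (K : Set X) (hK : IsCompact K) (f : X →ᵇ ℂ) :
    ∃ g ∈ S, (∀ x ∈ K, g x = f x) ∧ ‖g‖ ≤ 2 * ‖f‖ := by
  obtain ⟨g, hg, hgK, hgf⟩ := BoundedContinuousFunction.exists_mem_forall_eq_norm_le hclosed hsep
    hK f (ε := 1 / 3) (by norm_num) (by norm_num)
  exact ⟨g, hg, hgK, by norm_num at hgf; exact hgf⟩

/-- If `S` is a norm-closed unital `*`-subalgebra of `C_b(X)` (for `X` locally compact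
Hausdorff) which separates the points of `X`, `K ⊆ X` is compact and `f ∈ C_b(X)`, then
there is `g ∈ S` agreeing with `f` on `K` and satisfying `‖g‖ ≤ 2‖f‖`. -/
theorem stmt2 {X : Type*} [TopologicalSpace X] [LocallyCompactSpace X] [T2Space X]
    (S : StarSubalgebra ℂ (X →ᵇ ℂ)) (hclosed : IsClosed (S : Set (X →ᵇ ℂ)))
    (hsep : ∀ x y : X, x ≠ y → ∃ s ∈ S, s x ≠ s y)
    (K : Set X) (hK : IsCompact K) (f : X →ᵇ ℂ) :
    ∃ g ∈ S, (∀ x ∈ K, g x = f x) ∧ ‖g‖ ≤ 2 * ‖f‖ :=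
  stmt2_general S hclosed hsep K hK f
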